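/- arXiv:2004.07801 — 2 statements merged into one kernel-verified Lean document; each statement's English description precedes it below -/
import Mathlib

section
/- Weak type $(1,1)$ estimate for the Paley operator: Let $\varphi:\mathbb{N}\to(0,\infty)$ satisfy $M_\varphi:=\sup_{t>0}\, t\sum_{j\in\mathbb{N},\ \varphi(j)\ge t}\|u_j\|_{L^\infty}^2<\infty$. Then for every $f\in L^1(\mathbb{R}^n)$ and every $y>0$ one has $\sum_{j\in\mathbb{N},\ |\widehat{f}(j)| > y\,\varphi(j)\|u_j\|_{L^\infty}} \varphi(j)^2\,\|u_j\|_{L^\infty}^2 \le 2\,M_\varphi\,\|f\|_{L^1(\mathbb{R}^n)}/y$. -/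
/-!
Each Fourier coefficient satisfies `|f̂(j)| ≤ ‖f‖₁ ‖uⱼ‖_∞`, so only indices with
`φ(j) < ‖f‖₁ / y` are counted. For those, write `φ(j)² = ∫₀^{φ(j)} 2t dt` and exchange sum and
integral: at level `t` the integrand is `2t ∑_{φ(j) ≥ t} ‖uⱼ‖_∞² ≤ 2 M_φ`, and it vanishes for
`t ≥ ‖f‖₁ / y`.
-/

open MeasureTheory ENNReal Set

theorem enorm_integral_mul_conj_le {α 𝕜 : Type*} [MeasurableSpace α] [RCLike 𝕜]
    {μ : Measure α} {f : α → 𝕜} (hf : AEStronglyMeasurable f μ) (g : α → 𝕜) :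
    ‖∫ x, f x * starRingEnd 𝕜 (g x) ∂μ‖ₑ ≤ eLpNorm f 1 μ * eLpNorm g ⊤ μ := by
  calc ‖∫ x, f x * starRingEnd 𝕜 (g x) ∂μ‖ₑ
      ≤ eLpNorm (fun x => f x * starRingEnd 𝕜 (g x)) 1 μ := by
        rw [eLpNorm_one_eq_lintegral_enorm]; exact enorm_integral_le_lintegral_enorm _
    _ ≤ 1 * eLpNorm f 1 μ * eLpNorm g ⊤ μ :=
        eLpNorm_le_eLpNorm_mul_eLpNorm_top 1 hf g (fun a b => a * starRingEnd 𝕜 b) 1 <|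
          .of_forall fun x => by simp
    _ = eLpNorm f 1 μ * eLpNorm g ⊤ μ := by rw [one_mul]

theorem ofReal_sq_eq_setLIntegral_Ioc (a : ℝ) :
    ENNReal.ofReal a ^ 2 = ∫⁻ t in Ioc 0 a, ENNReal.ofReal (2 * t) := by
  rcases le_total a 0 with ha | ha
  · simp [Ioc_eq_empty_of_le ha, ofReal_eq_zero.mpr ha]
  have hint : ∫ t in Ioc 0 a, 2 * t = a ^ 2 := by
    rw [← intervalIntegral.integral_of_le ha, intervalIntegral.integral_const_mul, integral_id]
    ring
  rw [← ofReal_integral_eq_lintegral_ofReal, hint, ofReal_pow ha]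
  · exact (continuous_const.mul continuous_id).integrableOn_Ioc
  · filter_upwards [ae_restrict_mem measurableSet_Ioc] with t ht
    exact mul_nonneg zero_le_two ht.1.le

theorem tsum_ite_ofReal_sq_mul_le {ι : Type*} [Countable ι] (p : ι → Prop) [DecidablePred p]
    (φ : ι → ℝ) (w : ι → ℝ≥0∞) {M : ℝ≥0∞} {L : ℝ}
    (hM : ∀ t, 0 < t → ENNReal.ofReal t * ∑' j, (if t ≤ φ j then w j else 0) ≤ M)
    (hL : ∀ j, p j → φ j < L) :
    ∑' j, (if p j then ENNReal.ofReal (φ j) ^ 2 * w j else 0) ≤ 2 * M * ENNReal.ofReal L := by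
  set v : ι → ℝ≥0∞ := fun j => if p j then w j else 0
  set g : ι → ℝ → ℝ≥0∞ := fun j =>
    (Ioc 0 (φ j)).indicator fun t => ENNReal.ofReal (2 * t) * v j
  have hg : ∀ j, ∫⁻ t, g j t = ENNReal.ofReal (φ j) ^ 2 * v j := fun j => by
    rw [lintegral_indicator measurableSet_Ioc, lintegral_mul_const _ (by fun_prop),
      ofReal_sq_eq_setLIntegral_Ioc]
  have hg_meas : ∀ j, Measurable (g j) := fun j =>
    (by fun_prop : Measurable fun t : ℝ => ENNReal.ofReal (2 * t) * v j).indicator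
      measurableSet_Ioc
  have hg_le : ∀ t, ∑' j, g j t ≤ (Ioo 0 L).indicator (fun _ => 2 * M) t := by
    intro t
    by_cases ht : t ∈ Ioo 0 L
    · rw [indicator_of_mem ht]
      have hgj : ∀ j, g j t ≤ ENNReal.ofReal (2 * t) * (if t ≤ φ j then w j else 0) := by
        intro j
        by_cases htj : t ∈ Ioc 0 (φ j)
        · simp only [g, v, indicator_of_mem htj, if_pos htj.2]
          gcongr
          split_ifs <;> simp
        · simp [g, htj]
      calc ∑' j, g j t ≤ ∑' j, ENNReal.ofReal (2 * t) * (if t ≤ φ j then w j else 0) :=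
            ENNReal.tsum_le_tsum hgj
        _ = 2 * (ENNReal.ofReal t * ∑' j, if t ≤ φ j then w j else 0) := by
            rw [ENNReal.tsum_mul_left, ofReal_mul zero_le_two, ofReal_ofNat, mul_assoc]
        _ ≤ 2 * M := by gcongr; exact hM t ht.1
    · rw [indicator_of_notMem ht]
      refine (ENNReal.tsum_eq_zero.mpr fun j => indicator_apply_eq_zero.mpr fun htj => ?_).le
      by_cases hj : p j
      · exact absurd ⟨htj.1, htj.2.trans_lt (hL j hj)⟩ ht
      · simp [v, hj]
  calc ∑' j, (if p j then ENNReal.ofReal (φ j) ^ 2 * w j else 0)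
      = ∑' j, ∫⁻ t, g j t := by simp only [hg, v, mul_ite, mul_zero]
    _ = ∫⁻ t, ∑' j, g j t := (lintegral_tsum fun j => (hg_meas j).aemeasurable).symm
    _ ≤ ∫⁻ t, (Ioo 0 L).indicator (fun _ => 2 * M) t := lintegral_mono hg_le
    _ = 2 * M * ENNReal.ofReal L := by
      rw [lintegral_indicator_const measurableSet_Ioo, Real.volume_Ioo, sub_zero]

theorem paley_weak_type_one_one_general
    (n : ℕ)
    (u : ℕ → (Fin n → ℝ) → ℂ)
    (φ : ℕ → ℝ)
    (M : ℝ≥0∞)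
    (hM : M = ⨆ (t : ℝ) (_ : 0 < t), ENNReal.ofReal t *
        ∑' j : ℕ, (if t ≤ φ j then eLpNorm (u j) ⊤ volume ^ 2 else 0))
    (f : (Fin n → ℝ) → ℂ) (hf1 : MemLp f 1 volume)
    (y : ℝ) (hy : 0 < y) :
    (∑' j : ℕ,
        (if ENNReal.ofReal (y * φ j) * eLpNorm (u j) ⊤ volume
              < (‖∫ x, f x * (starRingEnd ℂ) (u j x)‖₊ : ℝ≥0∞)
          then ENNReal.ofReal (φ j) ^ 2 * eLpNorm (u j) ⊤ volume ^ 2 else 0))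
      ≤ 2 * M * eLpNorm f 1 volume / ENNReal.ofReal y := by
  have hF : eLpNorm f 1 volume ≠ ⊤ := hf1.eLpNorm_ne_top
  calc _ ≤ 2 * M * ENNReal.ofReal ((eLpNorm f 1 volume).toReal / y) := by
        refine tsum_ite_ofReal_sq_mul_le _ φ _
          (fun t ht => hM ▸ le_iSup₂ (α := ℝ≥0∞) t ht) fun j hj => ?_
        have hlt : ENNReal.ofReal (y * φ j) < eLpNorm f 1 volume :=
          lt_of_mul_lt_mul_right (hj.trans_le (enorm_integral_mul_conj_le hf1.1 (u j))) zero_le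
        rw [lt_div_iff₀ hy, mul_comm]
        exact (ofReal_lt_ofReal_iff'.mp (hlt.trans_eq (ofReal_toReal hF).symm)).1
    _ = 2 * M * eLpNorm f 1 volume / ENNReal.ofReal y := by
        rw [ofReal_div_of_pos hy, ofReal_toReal hF, mul_div_assoc]

/-- **Weak type (1,1) estimate for the Paley operator**: if `φ : ℕ → (0,∞)` satisfies
`M_φ := sup_{t>0} t ∑_{φ(j) ≥ t} ‖uⱼ‖_∞² < ∞`, then for every `f ∈ L¹(ℝⁿ)` and `y > 0`,
the weighted count of `j` with `|f̂(j)| > y φ(j) ‖uⱼ‖_∞` (with weights `φ(j)² ‖uⱼ‖_∞²`)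
is at most `2 M_φ ‖f‖_{L¹} / y`. -/
theorem paley_weak_type_one_one
    (n : ℕ) (hn : 1 ≤ n)
    (u : ℕ → (Fin n → ℝ) → ℂ)
    (hu2 : ∀ j, MemLp (u j) 2 volume)
    (huB : ∀ j, MemLp (u j) ⊤ volume)
    (horth : ∀ i j, (∫ x, u i x * (starRingEnd ℂ) (u j x)) = if i = j then (1 : ℂ) else 0)
    (hbasis : ∀ g : (Fin n → ℝ) → ℂ, MemLp g 2 volume →
      (∀ j, (∫ x, g x * (starRingEnd ℂ) (u j x)) = 0) → g =ᵐ[volume] 0)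
    (φ : ℕ → ℝ) (hφ : ∀ j, 0 < φ j)
    (M : ℝ≥0∞)
    (hM : M = ⨆ (t : ℝ) (_ : 0 < t), ENNReal.ofReal t *
        ∑' j : ℕ, (if t ≤ φ j then eLpNorm (u j) ⊤ volume ^ 2 else 0))
    (hMfin : M ≠ ⊤)
    (f : (Fin n → ℝ) → ℂ) (hf1 : MemLp f 1 volume)
    (y : ℝ) (hy : 0 < y) :
    (∑' j : ℕ,
        (if ENNReal.ofReal (y * φ j) * eLpNorm (u j) ⊤ volume
              < (‖∫ x, f x * (starRingEnd ℂ) (u j x)‖₊ : ℝ≥0∞)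
          then ENNReal.ofReal (φ j) ^ 2 * eLpNorm (u j) ⊤ volume ^ 2 else 0))
      ≤ 2 * M * eLpNorm f 1 volume / ENNReal.ofReal y :=
  paley_weak_type_one_one_general n u φ M hM f hf1 y hy
end

section
/- Boundedness of negative powers: Let $1<p\le 2\le q<\infty$ and let $m>(2+\alpha)\big(\frac{1}{p}-\frac{1}{q}\big)$. Then there is a constant $C$ such that for every $f\in L^p(\mathbb{R}^n)\cap L^2(\mathbb{R}^n)$ the function $A^{-m}f:=\sum_{j\in\mathbb{N}}\lambda_j^{-m}\,\widehat{f}(j)\,u_j$ (the series converging in $L^2$) satisfies $\|A^{-m}f\|_{L^q(\mathbb{R}^n)}\le C\,\|f\|_{L^p(\mathbb{R}^n)}$. -/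
/-!
Split the spectrum dyadically into the finite blocks `S k = {j | 2 ^ k ≤ λ j < 2 ^ (k + 1)}`,
so that `#S k ≤ C₂ 2^((k+1)α)`. On the span of `S k`, Cauchy–Schwarz and `‖u j‖_∞ ≤ C₁ 2^(k+1)`
bound the sup norm by `W_k = C₁ 2^(k+1) √(#S k)` times the `ℓ²` norm of the coefficients, and
interpolating with Parseval gives `‖·‖_r ≤ W_k^(1 - 2/r) ‖·‖_ℓ²` for every `r ≥ 2`. With `r = p'`
and Hölder against `f`, this yields `‖f̂|_{S k}‖_ℓ² ≤ W_k^(2/p - 1) ‖f‖_p`; with `r = q` it bounds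
the `k`-th block of `A^{-m} f` in `L^q` by `2^(-km) W_k^(2/p - 2/q) ‖f‖_p`, which decays
geometrically in `k` exactly when `m > (2 + α)(1/p - 1/q)`. The `L²` partial sums converge, so
an a.e. convergent subsequence and Fatou's lemma transfer the summed bound to `A^{-m} f`.
-/

open MeasureTheory ENNReal Set Filter Topology Function
open scoped ComplexConjugate

namespace OrthonormalExpansion

variable {X : Type*} [MeasurableSpace X] {μ : Measure X}

theorem eLpNorm_le_eLpNorm_two_rpow_mul_eLpNorm_top_rpow {E : Type*} [NormedAddCommGroup E]
    {h : X → E} (hh : AEStronglyMeasurable h μ) {r : ℝ} (hr : 2 ≤ r) :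
    eLpNorm h (.ofReal r) μ ≤ eLpNorm h 2 μ ^ (2 / r) * eLpNorm h ∞ μ ^ (1 - 2 / r) := by
  have hr0 : 0 < r := by linarith
  set A := eLpNorm h ∞ μ
  have hpow : ∫⁻ x, ‖h x‖ₑ ^ r ∂μ ≤ A ^ (r - 2) * ∫⁻ x, ‖h x‖ₑ ^ (2 : ℝ) ∂μ := by
    rw [← lintegral_const_mul'' _ (hh.enorm.pow_const _)]
    refine lintegral_mono_ae ((ae_le_eLpNormEssSup (f := h)).mono fun x hx => ?_)
    calc ‖h x‖ₑ ^ r = ‖h x‖ₑ ^ (r - 2) * ‖h x‖ₑ ^ (2 : ℝ) := by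
          rw [← ENNReal.rpow_add_of_nonneg _ _ (by linarith) zero_le_two, sub_add_cancel]
      _ ≤ A ^ (r - 2) * ‖h x‖ₑ ^ (2 : ℝ) := by
          gcongr ?_ * _
          exact ENNReal.rpow_le_rpow (hx.trans_eq eLpNorm_exponent_top.symm) (by linarith)
  rw [eLpNorm_eq_lintegral_rpow_enorm_toReal (by simpa using hr0) ofReal_ne_top,
    toReal_ofReal hr0.le,
    eLpNorm_eq_lintegral_rpow_enorm_toReal two_ne_zero ofNat_ne_top, toReal_ofNat]
  calc (∫⁻ x, ‖h x‖ₑ ^ r ∂μ) ^ (1 / r)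
      ≤ (A ^ (r - 2) * ∫⁻ x, ‖h x‖ₑ ^ (2 : ℝ) ∂μ) ^ (1 / r) := by gcongr
    _ = ((∫⁻ x, ‖h x‖ₑ ^ (2 : ℝ) ∂μ) ^ (1 / 2 : ℝ)) ^ (2 / r) * A ^ (1 - 2 / r) := by
      simp only [ENNReal.mul_rpow_of_nonneg _ _ (by positivity : (0 : ℝ) ≤ 1 / r),
        ← ENNReal.rpow_mul]
      rw [mul_comm]
      congr 2 <;> field_simp

theorem inner_toLp_toLp {f g : X → ℂ} (hf : MemLp f 2 μ) (hg : MemLp g 2 μ) :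
    inner ℂ (hf.toLp f) (hg.toLp g) = ∫ x, g x * conj (f x) ∂μ := by
  rw [L2.inner_def]
  refine integral_congr_ae ?_
  filter_upwards [hf.coeFn_toLp, hg.coeFn_toLp] with x hfx hgx
  rw [RCLike.inner_apply, hfx, hgx, mul_comm]

variable {ι : Type*} {u : ι → X → ℂ}

theorem orthonormal_toLp [DecidableEq ι] (hu : ∀ j, MemLp (u j) 2 μ)
    (horth : ∀ i j, ∫ x, u i x * conj (u j x) ∂μ = if i = j then 1 else 0) :
    Orthonormal ℂ fun j => (hu j).toLp (u j) := by
  rw [orthonormal_iff_ite]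
  intro i j
  rw [inner_toLp_toLp, horth]
  simp only [eq_comm]

theorem coeFn_sum_smul_toLp (hu : ∀ j, MemLp (u j) 2 μ) (T : Finset ι) (c : ι → ℂ) :
    ⇑(∑ j ∈ T, c j • (hu j).toLp (u j)) =ᵐ[μ] fun x => ∑ j ∈ T, c j * u j x := by
  have hterm : ∀ᵐ x ∂μ, ∀ j ∈ T, (c j • (hu j).toLp (u j)) x = c j * u j x := by
    rw [eventually_all_finset]
    intro j _
    filter_upwards [Lp.coeFn_smul (c j) ((hu j).toLp (u j)), (hu j).coeFn_toLp] with x h1 h2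
    rw [h1, Pi.smul_apply, h2, smul_eq_mul]
  filter_upwards [Lp.coeFn_fun_finsetSum T fun j => c j • (hu j).toLp (u j), hterm] with x hsum hx
  rw [hsum]
  exact Finset.sum_congr rfl hx

theorem eLpNorm_two_sum_eq (hu : ∀ j, MemLp (u j) 2 μ)
    (hv : Orthonormal ℂ fun j => (hu j).toLp (u j)) (T : Finset ι) (c : ι → ℂ) :
    eLpNorm (fun x => ∑ j ∈ T, c j * u j x) 2 μ = .ofReal √(∑ j ∈ T, ‖c j‖ ^ 2) := by
  set G := ∑ j ∈ T, c j • (hu j).toLp (u j)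
  have hG : ‖G‖ ^ 2 = ∑ j ∈ T, ‖c j‖ ^ 2 := by
    have := hv.inner_sum c c T
    rw [inner_self_eq_norm_sq_to_K] at this
    simp only [RCLike.conj_mul] at this
    exact_mod_cast this
  rw [← eLpNorm_congr_ae (coeFn_sum_smul_toLp hu T c), ← hG, Real.sqrt_sq (norm_nonneg _),
    Lp.norm_def, ofReal_toReal (Lp.eLpNorm_ne_top G)]

theorem eLpNorm_top_sum_le {T : Finset ι} {A : ℝ} (hA : 0 ≤ A)
    (hU : ∀ j ∈ T, ∀ᵐ x ∂μ, ‖u j x‖ ≤ A) (c : ι → ℂ) :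
    eLpNorm (fun x => ∑ j ∈ T, c j * u j x) ∞ μ
      ≤ .ofReal (A * √T.card * √(∑ j ∈ T, ‖c j‖ ^ 2)) := by
  rw [eLpNorm_exponent_top]
  refine eLpNormEssSup_le_of_ae_bound ?_
  filter_upwards [(eventually_all_finset T).2 hU] with x hx
  calc ‖∑ j ∈ T, c j * u j x‖ ≤ ∑ j ∈ T, ‖c j‖ * A :=
        norm_sum_le_of_le T fun j hj => by rw [norm_mul]; gcongr; exact hx j hj
    _ = A * ∑ j ∈ T, 1 * ‖c j‖ := by simp [Finset.mul_sum, mul_comm]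
    _ ≤ A * (√(∑ j ∈ T, (1 : ℝ) ^ 2) * √(∑ j ∈ T, ‖c j‖ ^ 2)) := by
        gcongr; exact Real.sum_mul_le_sqrt_mul_sqrt T _ _
    _ = A * √T.card * √(∑ j ∈ T, ‖c j‖ ^ 2) := by simp [mul_assoc]

theorem eLpNorm_sum_le_of_two_le (hu : ∀ j, MemLp (u j) 2 μ)
    (hv : Orthonormal ℂ fun j => (hu j).toLp (u j))
    {T : Finset ι} {A : ℝ} (hA : 0 ≤ A) (hU : ∀ j ∈ T, ∀ᵐ x ∂μ, ‖u j x‖ ≤ A) (c : ι → ℂ)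
    {r : ℝ} (hr : 2 ≤ r) :
    eLpNorm (fun x => ∑ j ∈ T, c j * u j x) (.ofReal r) μ
      ≤ .ofReal √(∑ j ∈ T, ‖c j‖ ^ 2) * .ofReal (A * √T.card) ^ (1 - 2 / r) := by
  have hr₁ : 0 ≤ 1 - 2 / r := by rw [sub_nonneg, div_le_one (by linarith)]; exact hr
  have hr₂ : 0 ≤ 2 / r := by positivity
  set s := √(∑ j ∈ T, ‖c j‖ ^ 2)
  have hmeas := (memLp_finsetSum T fun j _ => (hu j).const_mul (c j)).1
  calc _ ≤ _ := eLpNorm_le_eLpNorm_two_rpow_mul_eLpNorm_top_rpow hmeas hr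
    _ ≤ .ofReal s ^ (2 / r) * .ofReal (A * √T.card * s) ^ (1 - 2 / r) := by
      rw [eLpNorm_two_sum_eq hu hv]
      gcongr
      exact eLpNorm_top_sum_le hA hU c
    _ = .ofReal s * .ofReal (A * √T.card) ^ (1 - 2 / r) := by
      rw [ofReal_mul (by positivity), ENNReal.mul_rpow_of_nonneg _ _ hr₁, ← mul_assoc,
        mul_right_comm, ← ENNReal.rpow_add_of_nonneg _ _ hr₂ hr₁, add_sub_cancel, rpow_one]

noncomputable def coeff (μ : Measure X) (u : ι → X → ℂ) (f : X → ℂ) (j : ι) : ℂ :=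
  ∫ x, f x * conj (u j x) ∂μ

theorem integral_mul_conj_sum_coeff (hu : ∀ j, MemLp (u j) 2 μ) {f : X → ℂ} (hf : MemLp f 2 μ)
    (T : Finset ι) :
    ∫ x, f x * conj (∑ j ∈ T, coeff μ u f j * u j x) ∂μ = ∑ j ∈ T, ‖coeff μ u f j‖ ^ 2 := by
  have hint : ∀ j, Integrable (fun x => f x * conj (u j x)) μ := fun j =>
    hf.integrable_mul (hu j).star
  simp_rw [map_sum, Finset.mul_sum, map_mul, mul_left_comm (f _)]
  rw [integral_finsetSum _ fun j _ => (hint j).const_mul _]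
  push_cast
  refine Finset.sum_congr rfl fun j _ => ?_
  rw [integral_const_mul]
  exact RCLike.conj_mul _

theorem ofReal_sum_norm_sq_coeff_le (hu : ∀ j, MemLp (u j) 2 μ) {f : X → ℂ} (hf : MemLp f 2 μ)
    {p p' : ℝ} (hpp' : p.HolderConjugate p') (T : Finset ι) :
    .ofReal (∑ j ∈ T, ‖coeff μ u f j‖ ^ 2)
      ≤ eLpNorm f (.ofReal p) μ
        * eLpNorm (fun x => ∑ j ∈ T, coeff μ u f j * u j x) (.ofReal p') μ := by
  have := hpp'.ennrealOfReal
  set g := fun x => ∑ j ∈ T, coeff μ u f j * u j x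
  have hg := (memLp_finsetSum T fun j _ => (hu j).const_mul (coeff μ u f j)).1
  calc ENNReal.ofReal (∑ j ∈ T, ‖coeff μ u f j‖ ^ 2)
      = ‖∫ x, f x * conj (g x) ∂μ‖ₑ := by
        rw [integral_mul_conj_sum_coeff hu hf, ← ofReal_norm, Complex.norm_real,
          Real.norm_of_nonneg (by positivity)]
    _ ≤ eLpNorm (fun x => f x * conj (g x)) 1 μ := by
        rw [eLpNorm_one_eq_lintegral_enorm]; exact enorm_integral_le_lintegral_enorm _
    _ ≤ eLpNorm f (.ofReal p) μ * eLpNorm g (.ofReal p') μ := by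
        have := eLpNorm_le_eLpNorm_mul_eLpNorm'_of_norm (p := .ofReal p) (q := .ofReal p') (r := 1)
          hf.1 hg (fun a b => a * conj b) 1
          (.of_forall fun x => by rw [norm_mul, RCLike.norm_conj, NNReal.coe_one, one_mul])
        rwa [ENNReal.coe_one, one_mul] at this

theorem ofReal_sqrt_sum_norm_sq_coeff_le (hu : ∀ j, MemLp (u j) 2 μ)
    (hv : Orthonormal ℂ fun j => (hu j).toLp (u j)) {T : Finset ι} {A : ℝ} (hA : 0 ≤ A)
    (hU : ∀ j ∈ T, ∀ᵐ x ∂μ, ‖u j x‖ ≤ A) {f : X → ℂ} (hf : MemLp f 2 μ) {p : ℝ}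
    (hp1 : 1 < p) (hp2 : p ≤ 2) :
    .ofReal √(∑ j ∈ T, ‖coeff μ u f j‖ ^ 2)
      ≤ eLpNorm f (.ofReal p) μ * .ofReal (A * √T.card) ^ (2 / p - 1) := by
  set s := √(∑ j ∈ T, ‖coeff μ u f j‖ ^ 2)
  obtain hs | hs := eq_or_ne s 0
  · simp [hs]
  have hpp' := Real.HolderConjugate.conjExponent hp1
  have hinv := hpp'.inv_add_inv_eq_one
  have hp' : 2 ≤ p.conjExponent := by
    rw [← inv_le_inv₀ hpp'.symm.pos zero_lt_two]; linarith [inv_anti₀ hpp'.pos hp2]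
  have hexp : 1 - 2 / p.conjExponent = 2 / p - 1 := by
    rw [div_eq_mul_inv, div_eq_mul_inv]; linarith
  -- `s² ≤ ‖f‖ₚ · s · W^(2/p - 1)`, and `s` cancels
  have hsq : .ofReal s * .ofReal s
      ≤ eLpNorm f (.ofReal p) μ * .ofReal (A * √T.card) ^ (2 / p - 1) * .ofReal s := by
    rw [← ofReal_mul (Real.sqrt_nonneg _), Real.mul_self_sqrt (by positivity)]
    calc _ ≤ _ := ofReal_sum_norm_sq_coeff_le hu hf hpp' T
      _ ≤ eLpNorm f (.ofReal p) μ * (.ofReal s * .ofReal (A * √T.card) ^ (2 / p - 1)) := by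
        rw [← hexp]; gcongr; exact eLpNorm_sum_le_of_two_le hu hv hA hU _ hp'
      _ = _ := by ring
  exact (ENNReal.mul_le_mul_iff_left (by simpa using hs.lt_of_le' (Real.sqrt_nonneg _))
    ofReal_ne_top).1 hsq

theorem eLpNorm_sum_mul_coeff_le (hu : ∀ j, MemLp (u j) 2 μ)
    (hv : Orthonormal ℂ fun j => (hu j).toLp (u j)) {T : Finset ι} {A : ℝ} (hA : 0 ≤ A)
    (hU : ∀ j ∈ T, ∀ᵐ x ∂μ, ‖u j x‖ ≤ A) {f : X → ℂ} (hf : MemLp f 2 μ) {p q : ℝ}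
    (hp1 : 1 < p) (hp2 : p ≤ 2) (hq2 : 2 ≤ q) {w : ι → ℂ} {ω : ℝ} (hω : 0 ≤ ω)
    (hw : ∀ j ∈ T, ‖w j‖ ≤ ω) :
    eLpNorm (fun x => ∑ j ∈ T, w j * coeff μ u f j * u j x) (.ofReal q) μ
      ≤ .ofReal ω * eLpNorm f (.ofReal p) μ * .ofReal (A * √T.card) ^ (2 / p - 2 / q) := by
  have hp : 0 ≤ 2 / p - 1 := by rw [sub_nonneg, le_div_iff₀ (by linarith)]; linarith
  have hq : 0 ≤ 1 - 2 / q := by rw [sub_nonneg, div_le_one (by linarith)]; exact hq2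
  have hweight : √(∑ j ∈ T, ‖w j * coeff μ u f j‖ ^ 2) ≤ ω * √(∑ j ∈ T, ‖coeff μ u f j‖ ^ 2) := by
    rw [← Real.sqrt_sq hω, ← Real.sqrt_mul (sq_nonneg ω), Finset.mul_sum]
    gcongr with j hj
    rw [norm_mul, mul_pow]
    gcongr
    exact hw j hj
  calc _ ≤ _ := eLpNorm_sum_le_of_two_le hu hv hA hU _ hq2
    _ ≤ .ofReal ω * .ofReal √(∑ j ∈ T, ‖coeff μ u f j‖ ^ 2)
          * .ofReal (A * √T.card) ^ (1 - 2 / q) := by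
      rw [← ofReal_mul hω]; gcongr
    _ ≤ .ofReal ω * (eLpNorm f (.ofReal p) μ * .ofReal (A * √T.card) ^ (2 / p - 1))
          * .ofReal (A * √T.card) ^ (1 - 2 / q) := by
      gcongr; exact ofReal_sqrt_sum_norm_sq_coeff_le hu hv hA hU hf hp1 hp2
    _ = _ := by
      rw [mul_assoc, mul_assoc, ← ENNReal.rpow_add_of_nonneg _ _ hp hq, ← mul_assoc]
      ring_nf

theorem summable_norm_sq_mul_coeff (hu : ∀ j, MemLp (u j) 2 μ)
    (hv : Orthonormal ℂ fun j => (hu j).toLp (u j)) {f : X → ℂ} (hf : MemLp f 2 μ)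
    {w : ι → ℂ} (hw : ∀ j, ‖w j‖ ≤ 1) :
    Summable fun j => ‖w j * coeff μ u f j‖ ^ 2 := by
  have hbessel : Summable fun j => ‖coeff μ u f j‖ ^ 2 :=
    (hv.inner_products_summable (hf.toLp f)).congr fun j => by rw [inner_toLp_toLp]; rfl
  refine hbessel.of_nonneg_of_le (fun _ => by positivity) fun j => ?_
  rw [norm_mul]
  gcongr
  exact mul_le_of_le_one_left (norm_nonneg _) (hw j)

theorem exists_hasSum_smul_inner_eq {E : Type*} [NormedAddCommGroup E] [InnerProductSpace ℂ E]
    [CompleteSpace E] {v : ι → E} (hv : Orthonormal ℂ v) {b : ι → ℂ}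
    (hb : Summable fun j => ‖b j‖ ^ 2) :
    ∃ g : E, HasSum (fun j => b j • v j) g ∧ ∀ j, inner ℂ (v j) g = b j := by
  classical
  have hs : Summable fun j => b j • v j :=
    (hv.orthogonalFamily.summable_iff_norm_sq_summable b).2 hb
  refine ⟨_, hs.hasSum, fun j => ?_⟩
  have hterm : (fun i => inner ℂ (v j) (b i • v i)) = fun i => if i = j then b j else 0 := by
    funext i
    rw [inner_smul_right, orthonormal_iff_ite.1 hv j i]
    obtain rfl | h := eq_or_ne i j
    · simp
    · simp [h, h.symm]
  exact ((innerSL ℂ (v j)).hasSum hs.hasSum).unique (hterm ▸ hasSum_ite_eq j (b j))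

theorem eLpNorm_le_of_tendsto {E : Type*} [NormedAddCommGroup E] {p : ℝ≥0∞} [Fact (1 ≤ p)]
    {F : ℕ → Lp E p μ} {g : Lp E p μ} (hF : Tendsto F atTop (𝓝 g)) {q M : ℝ≥0∞}
    (hM : ∀ n, eLpNorm (F n) q μ ≤ M) :
    eLpNorm g q μ ≤ M := by
  obtain ⟨ns, -, hns⟩ := (tendstoInMeasure_of_tendsto_Lp hF).exists_seq_tendsto_ae
  exact Lp.eLpNorm_le_of_ae_tendsto (.of_forall fun n => hM (ns n))
    (fun n => Lp.aestronglyMeasurable _) hns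

theorem eLpNorm_le_tsum_of_hasSum (hu : ∀ j, MemLp (u j) 2 μ) {b : ι → ℂ} {g : Lp ℂ 2 μ}
    (hg : HasSum (fun j => b j • (hu j).toLp (u j)) g) {S : ℕ → Finset ι}
    (hdisj : Pairwise (Disjoint on S)) (hcover : ∀ j, ∃ k, j ∈ S k) {q : ℝ≥0∞} (hq : 1 ≤ q) :
    eLpNorm g q μ ≤ ∑' k, eLpNorm (fun x => ∑ j ∈ S k, b j * u j x) q μ := by
  classical
  set U : ℕ → Finset ι := fun K => (Finset.range K).biUnion S
  have hU : Tendsto U atTop atTop := by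
    refine tendsto_atTop_finset_of_monotone
      (fun K K' h => Finset.biUnion_subset_biUnion_of_subset_left _ (Finset.range_mono h))
      fun j => ?_
    obtain ⟨k, hk⟩ := hcover j
    exact ⟨k + 1, Finset.mem_biUnion.2 ⟨k, Finset.self_mem_range_succ k, hk⟩⟩
  refine eLpNorm_le_of_tendsto (hg.comp hU) fun K => ?_
  have hsplit : (fun x => ∑ j ∈ U K, b j * u j x)
      = ∑ k ∈ Finset.range K, fun x => ∑ j ∈ S k, b j * u j x := by
    ext x
    rw [Finset.sum_apply, Finset.sum_biUnion (hdisj.set_pairwise _)]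
  rw [Function.comp_apply, eLpNorm_congr_ae (coeFn_sum_smul_toLp hu (U K) b), hsplit]
  exact (eLpNorm_sum_le (fun k _ => (memLp_finsetSum (S k) fun j _ =>
    (hu j).const_mul (b j)).1) hq).trans (ENNReal.sum_le_tsum _)

theorem tsum_ite_one_eq_encard (P : ι → Prop) [DecidablePred P] :
    ∑' j, (if P j then (1 : ℝ≥0∞) else 0) = {j | P j}.encard := by
  rw [← tsum_set_one, tsum_subtype {j | P j} fun _ => (1 : ℝ≥0∞)]
  simp [Set.indicator_apply]

theorem finite_setOf_of_tsum_ite_le {P : ι → Prop} [DecidablePred P] {B : ℝ}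
    (h : ∑' j, (if P j then (1 : ℝ≥0∞) else 0) ≤ .ofReal B) : {j | P j}.Finite := by
  rw [tsum_ite_one_eq_encard] at h
  exact encard_ne_top_iff.1 fun htop => by simp [htop] at h

theorem card_le_of_tsum_ite_le {P : ι → Prop} [DecidablePred P] {B : ℝ} (hB : 0 ≤ B)
    (h : ∑' j, (if P j then (1 : ℝ≥0∞) else 0) ≤ .ofReal B) {T : Finset ι}
    (hT : ∀ j ∈ T, P j) : (T.card : ℝ) ≤ B := by
  rw [tsum_ite_one_eq_encard] at h
  have hle : ((T.card : ℕ∞) : ℝ≥0∞) ≤ .ofReal B :=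
    le_trans (by gcongr; rw [← encard_coe_eq_coe_finsetCard]; exact encard_le_encard hT) h
  rwa [ENat.toENNReal_coe, ← ofReal_natCast, ofReal_le_ofReal_iff hB] at hle

theorem exists_dyadic_partition {lam : ι → ℝ} (hlam : ∀ j, 1 ≤ lam j)
    (hfin : ∀ k : ℕ, {j | lam j ≤ 2 ^ k}.Finite) :
    ∃ S : ℕ → Finset ι, Pairwise (Disjoint on S) ∧ (∀ j, ∃ k, j ∈ S k) ∧
      ∀ k, ∀ j ∈ S k, 2 ^ k ≤ lam j ∧ lam j < 2 ^ (k + 1) := by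
  classical
  refine ⟨fun k => (hfin (k + 1)).toFinset.filter fun j => 2 ^ k ≤ lam j ∧ lam j < 2 ^ (k + 1),
    ?_, fun j => ?_, fun k j hj => (Finset.mem_filter.1 hj).2⟩
  · refine (pairwise_disjoint_on _).2 fun a b hab => Finset.disjoint_left.2 fun j hja hjb => ?_
    have : (2 : ℝ) ^ (a + 1) ≤ 2 ^ b := pow_le_pow_right₀ one_le_two hab
    linarith [(Finset.mem_filter.1 hja).2.2, (Finset.mem_filter.1 hjb).2.1]
  · obtain ⟨k, hk⟩ := exists_nat_pow_near (hlam j) one_lt_two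
    exact ⟨k, Finset.mem_filter.2 ⟨(hfin _).mem_toFinset.2 hk.2.le, hk⟩⟩

theorem rpow_neg_mul_rpow_le {x C₁ C₂ α θ m N : ℝ} (hx : 0 < x) (hC₁ : 0 ≤ C₁) (hθ : 0 ≤ θ)
    (hN : N ≤ C₂ * (2 * x) ^ α) :
    x ^ (-m) * (C₁ * (2 * x) * √N) ^ θ
      ≤ (C₁ * √C₂) ^ θ * 2 ^ ((1 + α / 2) * θ) * x ^ ((1 + α / 2) * θ - m) := by
  have h2x : 0 < 2 * x := by positivity
  have hW : C₁ * (2 * x) * √N ≤ C₁ * √C₂ * (2 * x) ^ (1 + α / 2) := by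
    calc C₁ * (2 * x) * √N ≤ C₁ * (2 * x) * √(C₂ * (2 * x) ^ α) := by gcongr
      _ = C₁ * √C₂ * (2 * x) ^ (1 + α / 2) := by
        rw [Real.sqrt_mul' _ (by positivity), Real.sqrt_eq_rpow ((2 * x) ^ α),
          ← Real.rpow_mul h2x.le, Real.rpow_add h2x, Real.rpow_one]
        ring_nf
  calc x ^ (-m) * (C₁ * (2 * x) * √N) ^ θ
      ≤ x ^ (-m) * (C₁ * √C₂ * (2 * x) ^ (1 + α / 2)) ^ θ := by gcongr
    _ = _ := by
      rw [Real.mul_rpow (by positivity) (by positivity), ← Real.rpow_mul h2x.le,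
        Real.mul_rpow zero_le_two hx.le, sub_eq_add_neg, Real.rpow_add hx]
      ring

theorem ae_norm_le_of_eLpNorm_top_le {E : Type*} [NormedAddCommGroup E] {f : X → E} {C : ℝ}
    (hC : 0 ≤ C) (h : eLpNorm f ∞ μ ≤ .ofReal C) : ∀ᵐ x ∂μ, ‖f x‖ ≤ C := by
  filter_upwards [ae_le_eLpNormEssSup (f := f)] with x hx
  rw [← ofReal_le_ofReal_iff hC, ofReal_norm]
  exact hx.trans (eLpNorm_exponent_top.symm.trans_le h)

theorem norm_ofReal_rpow_neg_le {a b m : ℝ} (ha : 0 < a) (hab : a ≤ b) (hm : 0 ≤ m) :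
    ‖((b ^ (-m) : ℝ) : ℂ)‖ ≤ a ^ (-m) := by
  rw [Complex.norm_real, Real.norm_of_nonneg (Real.rpow_nonneg (ha.le.trans hab) _)]
  exact Real.rpow_le_rpow_of_nonpos ha hab (neg_nonpos.2 hm)

theorem eLpNorm_dyadic_block_le (hu : ∀ j, MemLp (u j) 2 μ)
    (hv : Orthonormal ℂ fun j => (hu j).toLp (u j)) {lam : ι → ℝ} {C₁ C₂ α : ℝ} (hC₁ : 0 ≤ C₁)
    (hU : ∀ j, ∀ᵐ x ∂μ, ‖u j x‖ ≤ C₁ * lam j) {f : X → ℂ} (hf : MemLp f 2 μ) {p q m : ℝ}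
    (hp1 : 1 < p) (hp2 : p ≤ 2) (hq2 : 2 ≤ q) (hm : 0 ≤ m) {k : ℕ} {T : Finset ι}
    (hT : ∀ j ∈ T, 2 ^ k ≤ lam j ∧ lam j < 2 ^ (k + 1))
    (hcard : (T.card : ℝ) ≤ C₂ * (2 ^ (k + 1)) ^ α) :
    eLpNorm (fun x => ∑ j ∈ T, ((lam j ^ (-m) : ℝ) : ℂ) * coeff μ u f j * u j x) (.ofReal q) μ
      ≤ eLpNorm f (.ofReal p) μ * (.ofReal ((C₁ * √C₂) ^ (2 / p - 2 / q)
          * 2 ^ ((1 + α / 2) * (2 / p - 2 / q)))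
        * .ofReal (2 ^ ((1 + α / 2) * (2 / p - 2 / q) - m)) ^ k) := by
  set θ := 2 / p - 2 / q
  have hθ : 0 ≤ θ := by
    simp only [θ, sub_nonneg]; gcongr; linarith
  have hx : (0 : ℝ) < 2 ^ k := by positivity
  have hUT : ∀ j ∈ T, ∀ᵐ x ∂μ, ‖u j x‖ ≤ C₁ * (2 * 2 ^ k) := fun j hj =>
    (hU j).mono fun x hx => hx.trans (by rw [← pow_succ']; gcongr; exact (hT j hj).2.le)
  calc _ ≤ .ofReal ((2 ^ k) ^ (-m)) * eLpNorm f (.ofReal p) μ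
        * .ofReal (C₁ * (2 * 2 ^ k) * √T.card) ^ θ :=
      eLpNorm_sum_mul_coeff_le hu hv (by positivity) hUT hf hp1 hp2 hq2 (by positivity)
        fun j hj => norm_ofReal_rpow_neg_le hx (hT j hj).1 hm
    _ = eLpNorm f (.ofReal p) μ
        * .ofReal ((2 ^ k) ^ (-m) * (C₁ * (2 * 2 ^ k) * √T.card) ^ θ) := by
      rw [ofReal_mul (by positivity : (0 : ℝ) ≤ (2 ^ k) ^ (-m)),
        ofReal_rpow_of_nonneg (by positivity) hθ]
      ring
    _ ≤ _ := by
      rw [← ofReal_pow (by positivity), ← ofReal_mul (by positivity),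
        Real.rpow_pow_comm zero_le_two]
      exact mul_le_mul_right (ofReal_le_ofReal <| rpow_neg_mul_rpow_le hx hC₁ hθ <|
        pow_succ' (2 : ℝ) k ▸ hcard) _

end OrthonormalExpansion

open OrthonormalExpansion

theorem negative_powers_bounded_anharmonic_general
    (n : ℕ)
    (u : ℕ → (Fin n → ℝ) → ℂ)
    (hu2 : ∀ j, MemLp (u j) 2 volume)
    (horth : ∀ i j, (∫ x, u i x * (starRingEnd ℂ) (u j x)) = if i = j then (1 : ℂ) else 0)
    (lam : ℕ → ℝ) (hlam : ∀ j, 1 ≤ lam j)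
    (C₁ C₂ α : ℝ) (hC₁ : 0 < C₁) (hC₂ : 0 < C₂) (hα : 0 < α)
    (hub : ∀ j, eLpNorm (u j) ⊤ volume ≤ ENNReal.ofReal (C₁ * lam j))
    (hcount : ∀ v : ℝ, 1 ≤ v →
      (∑' j : ℕ, (if lam j ≤ v then (1 : ℝ≥0∞) else 0)) ≤ ENNReal.ofReal (C₂ * v ^ α))
    (p q : ℝ) (hp1 : 1 < p) (hp2 : p ≤ 2) (hq2 : 2 ≤ q)
    (m : ℝ) (hm : (2 + α) * (1 / p - 1 / q) < m) :
    ∃ C : ℝ≥0∞, C ≠ ⊤ ∧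
      ∀ f : (Fin n → ℝ) → ℂ,
        MemLp f (ENNReal.ofReal p) volume → MemLp f 2 volume →
        ∃ g : (Fin n → ℝ) → ℂ, MemLp g 2 volume ∧
          (∀ j, (∫ x, g x * (starRingEnd ℂ) (u j x))
              = ((lam j ^ (-m) : ℝ) : ℂ) * ∫ x, f x * (starRingEnd ℂ) (u j x)) ∧
          MemLp g (ENNReal.ofReal q) volume ∧
          eLpNorm g (ENNReal.ofReal q) volume ≤ C * eLpNorm f (ENNReal.ofReal p) volume := by
  set θ := 2 / p - 2 / q
  have hθ : 0 ≤ θ := by simp only [θ, sub_nonneg]; gcongr; linarith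
  have hm' : (1 + α / 2) * θ < m := by
    linarith [show (1 + α / 2) * θ = (2 + α) * (1 / p - 1 / q) by ring]
  set K := ENNReal.ofReal ((C₁ * √C₂) ^ θ * 2 ^ ((1 + α / 2) * θ))
  set t := ENNReal.ofReal (2 ^ ((1 + α / 2) * θ - m))
  have ht : t < 1 := ofReal_lt_one.2 (Real.rpow_lt_one_of_one_lt_of_neg one_lt_two (by linarith))
  have hv := orthonormal_toLp hu2 horth
  have hm0 : 0 ≤ m := by nlinarith
  have hU j : ∀ᵐ x, ‖u j x‖ ≤ C₁ * lam j :=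
    ae_norm_le_of_eLpNorm_top_le (mul_nonneg hC₁.le (zero_le_one.trans (hlam j))) (hub j)
  obtain ⟨S, hdisj, hcover, hS⟩ := exists_dyadic_partition hlam fun k =>
    finite_setOf_of_tsum_ite_le (hcount _ (one_le_pow₀ one_le_two))
  refine ⟨K * (1 - t)⁻¹, mul_ne_top ofReal_ne_top (inv_ne_top.2 (tsub_pos_of_lt ht).ne'),
    fun f hfp hf2 => ?_⟩
  have hw j : ‖((lam j ^ (-m) : ℝ) : ℂ)‖ ≤ 1 := by
    simpa using norm_ofReal_rpow_neg_le one_pos (hlam j) hm0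
  obtain ⟨g, hg, hcoeff⟩ :=
    exists_hasSum_smul_inner_eq hv (summable_norm_sq_mul_coeff hu2 hv hf2 hw)
  have hgq : eLpNorm g (.ofReal q) volume ≤ K * (1 - t)⁻¹ * eLpNorm f (.ofReal p) volume := calc
    _ ≤ _ := eLpNorm_le_tsum_of_hasSum hu2 hg hdisj hcover (by rw [one_le_ofReal]; linarith)
    _ ≤ ∑' k, eLpNorm f (.ofReal p) volume * (K * t ^ k) := ENNReal.tsum_le_tsum fun k =>
      eLpNorm_dyadic_block_le hu2 hv hC₁.le hU hf2 hp1 hp2 hq2 hm0 (hS k)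
        (card_le_of_tsum_ite_le (by positivity) (hcount _ (one_le_pow₀ one_le_two))
          fun j hj => (hS k j hj).2.le)
    _ = _ := by rw [ENNReal.tsum_mul_left, ENNReal.tsum_mul_left, ENNReal.tsum_geometric]; ring
  refine ⟨g, Lp.memLp g, fun j => ?_, ⟨Lp.aestronglyMeasurable g, hgq.trans_lt ?_⟩, hgq⟩
  · rw [← inner_toLp_toLp (hu2 j) (Lp.memLp g), Lp.toLp_coeFn, hcoeff]
    rfl
  · exact mul_lt_top (mul_lt_top ofReal_lt_top (inv_lt_top.2 (tsub_pos_of_lt ht))) hfp.2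

/-- **Boundedness of negative powers**: under the standing hypotheses on the eigenfunctions
`(u j)` and eigenvalues `(lam j)` of the anharmonic oscillator (`‖uⱼ‖_∞ ≤ C₁ lam j`,
counting bound `#{j : lam j ≤ v} ≤ C₂ v^α`), if `1 < p ≤ 2 ≤ q < ∞` and
`m > (2+α)(1/p - 1/q)`, then there is a constant `C` such that for every `f ∈ Lᵖ ∩ L²`
the `L²` function `A^{-m} f = ∑ⱼ lam j^{-m} f̂(j) uⱼ` satisfies
`‖A^{-m} f‖_{L^q} ≤ C ‖f‖_{Lᵖ}`. -/
theorem negative_powers_bounded_anharmonic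
    (n : ℕ) (hn : 1 ≤ n)
    (u : ℕ → (Fin n → ℝ) → ℂ)
    (hu2 : ∀ j, MemLp (u j) 2 volume)
    (huB : ∀ j, MemLp (u j) ⊤ volume)
    (horth : ∀ i j, (∫ x, u i x * (starRingEnd ℂ) (u j x)) = if i = j then (1 : ℂ) else 0)
    (hbasis : ∀ g : (Fin n → ℝ) → ℂ, MemLp g 2 volume →
      (∀ j, (∫ x, g x * (starRingEnd ℂ) (u j x)) = 0) → g =ᵐ[volume] 0)
    (lam : ℕ → ℝ) (hlam : ∀ j, 1 ≤ lam j)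
    (C₁ C₂ α : ℝ) (hC₁ : 0 < C₁) (hC₂ : 0 < C₂) (hα : 0 < α)
    (hub : ∀ j, eLpNorm (u j) ⊤ volume ≤ ENNReal.ofReal (C₁ * lam j))
    (hcount : ∀ v : ℝ, 1 ≤ v →
      (∑' j : ℕ, (if lam j ≤ v then (1 : ℝ≥0∞) else 0)) ≤ ENNReal.ofReal (C₂ * v ^ α))
    (p q : ℝ) (hp1 : 1 < p) (hp2 : p ≤ 2) (hq2 : 2 ≤ q)
    (m : ℝ) (hm : (2 + α) * (1 / p - 1 / q) < m) :
    ∃ C : ℝ≥0∞, C ≠ ⊤ ∧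
      ∀ f : (Fin n → ℝ) → ℂ,
        MemLp f (ENNReal.ofReal p) volume → MemLp f 2 volume →
        ∃ g : (Fin n → ℝ) → ℂ, MemLp g 2 volume ∧
          (∀ j, (∫ x, g x * (starRingEnd ℂ) (u j x))
              = ((lam j ^ (-m) : ℝ) : ℂ) * ∫ x, f x * (starRingEnd ℂ) (u j x)) ∧
          MemLp g (ENNReal.ofReal q) volume ∧
          eLpNorm g (ENNReal.ofReal q) volume ≤ C * eLpNorm f (ENNReal.ofReal p) volume :=
  negative_powers_bounded_anharmonic_general n u hu2 horth lam hlam C₁ C₂ α hC₁ hC₂ hα hub hcount p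
    q hp1 hp2 hq2 m hm
end
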